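/- arXiv:1808.04455 — 3 statements merged into one kernel-verified Lean document; each statement's English description precedes it below -/
import Mathlib

section
/- Let L be an upper semilattice equipped with a metric d satisfying d(x∨y, x∨z) ≤ d(y,z) for all x,y,z. Suppose every increasing Cauchy sequence in L converges and every decreasing Cauchy sequence in L converges. Then every Cauchy sequence in L converges, i.e., L is a complete metric space. -/
open Filter

/-- An upper semilattice with a metric satisfying `d(x∨y, x∨z) ≤ d(y,z)`, in which every
increasing Cauchy sequence converges and every decreasing Cauchy sequence converges, is
complete as a metric space. -/
theorem stmt14 {L : Type*} [SemilatticeSup L] [MetricSpace L]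
    (hLip : ∀ x y z : L, dist (x ⊔ y) (x ⊔ z) ≤ dist y z)
    (hinc : ∀ u : ℕ → L, Monotone u → CauchySeq u → ∃ a, Tendsto u atTop (nhds a))
    (hdec : ∀ u : ℕ → L, Antitone u → CauchySeq u → ∃ a, Tendsto u atTop (nhds a)) :
    ∀ u : ℕ → L, CauchySeq u → ∃ a, Tendsto u atTop (nhds a) := by
  -- sup is continuous (1-Lipschitz in each variable), hence ≤ passes to limits
  have le_limit : ∀ (a b : ℕ → L) (x y : L), (∀ k, a k ≤ b k) →
      Tendsto a atTop (nhds x) → Tendsto b atTop (nhds y) → x ≤ y := by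
    intro a b x y hab ha hb
    have h1 : Tendsto (fun k => a k ⊔ b k) atTop (nhds (x ⊔ y)) := by
      rw [Metric.tendsto_atTop] at ha hb ⊢
      intro ε hε
      obtain ⟨N₁, hN₁⟩ := ha (ε / 2) (by linarith)
      obtain ⟨N₂, hN₂⟩ := hb (ε / 2) (by linarith)
      refine ⟨max N₁ N₂, fun n hn => ?_⟩
      calc dist (a n ⊔ b n) (x ⊔ y)
          ≤ dist (a n ⊔ b n) (x ⊔ b n) + dist (x ⊔ b n) (x ⊔ y) := dist_triangle _ _ _
        _ ≤ dist (a n) x + dist (b n) y := by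
            gcongr
            · calc dist (a n ⊔ b n) (x ⊔ b n) = dist (b n ⊔ a n) (b n ⊔ x) := by
                    rw [sup_comm (a n), sup_comm x]
                _ ≤ dist (a n) x := hLip _ _ _
            · exact hLip _ _ _
        _ < ε / 2 + ε / 2 := by
            exact add_lt_add (hN₁ n (le_trans (le_max_left _ _) hn))
              (hN₂ n (le_trans (le_max_right _ _) hn))
        _ = ε := by ring
    have h2 : Tendsto (fun k => a k ⊔ b k) atTop (nhds y) := by
      have : (fun k => a k ⊔ b k) = b := funext fun k => sup_eq_right.2 (hab k)
      rw [this]; exact hb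
    have := tendsto_nhds_unique h1 h2
    exact le_of_sup_eq this
  intro u hu
  -- extract a subsequence with geometrically controlled increments
  obtain ⟨f, hf, hfd⟩ := Metric.exists_subseq_bounded_of_cauchySeq u hu
    (fun n => (1/2) ^ n) (fun n => by positivity)
  set s : ℕ → L := u ∘ f with hs_def
  have hs : ∀ n, dist (s n) (s (n + 1)) ≤ (1/2 : ℝ) ^ n := by
    intro n
    have := hfd n (f (n + 1)) (hf (Nat.lt_succ_self n)).le
    rw [dist_comm] at this
    exact this.le
  -- it suffices to show the subsequence converges
  suffices h : ∃ a, Tendsto s atTop (nhds a) by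
    obtain ⟨a, ha⟩ := h
    exact ⟨a, tendsto_nhds_of_cauchySeq_of_subseq hu hf.tendsto_atTop ha⟩
  clear hu hfd
  -- w n k = s n ⊔ s (n+1) ⊔ ... ⊔ s (n+k)
  let w : ℕ → ℕ → L := fun n => Nat.rec (s n) (fun k wk => wk ⊔ s (n + k + 1))
  have hw0 : ∀ n, w n 0 = s n := fun n => rfl
  have hwsucc : ∀ n k, w n (k + 1) = w n k ⊔ s (n + k + 1) := fun n k => rfl
  have hle : ∀ n k, s (n + k) ≤ w n k := by
    intro n k
    induction k with
    | zero => exact le_of_eq (hw0 n).symm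
    | succ k ih => rw [hwsucc]; exact le_sup_right
  have hmono : ∀ n, Monotone (w n) := by
    intro n
    apply monotone_nat_of_le_succ
    intro k
    rw [hwsucc]; exact le_sup_left
  have hstep : ∀ n k, dist (w n k) (w n (k + 1)) ≤ (1/2 : ℝ) ^ n * (1/2) ^ k := by
    intro n k
    have h1 : w n k = w n k ⊔ s (n + k) := (sup_eq_left.2 (hle n k)).symm
    calc dist (w n k) (w n (k + 1))
        = dist (w n k ⊔ s (n + k)) (w n k ⊔ s (n + k + 1)) := by
          rw [← h1, hwsucc]
      _ ≤ dist (s (n + k)) (s (n + k + 1)) := hLip _ _ _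
      _ ≤ (1/2 : ℝ) ^ (n + k) := hs (n + k)
      _ = (1/2 : ℝ) ^ n * (1/2) ^ k := pow_add _ _ _
  have hwc : ∀ n, CauchySeq (w n) := fun n =>
    cauchySeq_of_le_geometric (1/2) ((1/2) ^ n) (by norm_num) (hstep n)
  choose v hv using fun n => hinc (w n) (hmono n) (hwc n)
  -- dist (s n) (v n) ≤ 2 * (1/2)^n
  have hdist : ∀ n, dist (s n) (v n) ≤ 2 * (1/2 : ℝ) ^ n := by
    intro n
    have := dist_le_of_le_geometric_of_tendsto₀ (1/2) ((1/2)^n)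
      (by norm_num) (hstep n) (hv n)
    rw [hw0 n] at this
    calc dist (s n) (v n) ≤ (1/2:ℝ)^n / (1 - 1/2) := this
      _ = 2 * (1/2:ℝ)^n := by ring
  -- v is antitone
  have hwle : ∀ n k, w (n + 1) k ≤ w n (k + 1) := by
    intro n k
    induction k with
    | zero =>
      rw [hw0, hwsucc, hw0]
      have : n + 0 + 1 = n + 1 := by ring
      rw [this]
      exact le_sup_right
    | succ k ih =>
      rw [hwsucc (n+1) k, hwsucc n (k+1)]
      have : n + 1 + k + 1 = n + (k + 1) + 1 := by ring
      rw [this]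
      exact sup_le_sup_right ih _
  have hvanti : Antitone v := by
    apply antitone_nat_of_succ_le
    intro n
    exact le_limit (w (n + 1)) (fun k => w n (k + 1)) (v (n + 1)) (v n)
      (hwle n) (hv (n + 1)) ((hv n).comp (tendsto_add_atTop_nat 1))
  -- v is Cauchy
  have hscauchy : CauchySeq s :=
    cauchySeq_of_le_geometric (1/2) 1 (by norm_num) (by simpa using hs)
  have hvcauchy : CauchySeq v := by
    rw [Metric.cauchySeq_iff] at hscauchy ⊢
    intro ε hε
    obtain ⟨N₁, hN₁⟩ := hscauchy (ε / 3) (by linarith)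
    obtain ⟨N₂, hN₂⟩ : ∃ N₂ : ℕ, ∀ n ≥ N₂, 2 * (1/2:ℝ)^n < ε / 3 := by
      have : Tendsto (fun n : ℕ => 2 * (1/2:ℝ)^n) atTop (nhds 0) := by
        simpa using (tendsto_pow_atTop_nhds_zero_of_lt_one (by norm_num : (0:ℝ) ≤ 1/2)
          (by norm_num)).const_mul 2
      have := (this.eventually (gt_mem_nhds (by linarith : (0:ℝ) < ε / 3))).exists_forall_of_atTop
      simpa using this
    refine ⟨max N₁ N₂, fun m hm n hn => ?_⟩
    have hm₁ := le_trans (le_max_left _ _) hm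
    have hm₂ := le_trans (le_max_right _ _) hm
    have hn₁ := le_trans (le_max_left _ _) hn
    have hn₂ := le_trans (le_max_right _ _) hn
    calc dist (v m) (v n)
        ≤ dist (v m) (s m) + dist (s m) (s n) + dist (s n) (v n) := dist_triangle4 _ _ _ _
      _ < ε / 3 + ε / 3 + ε / 3 := by
          refine add_lt_add (add_lt_add ?_ (hN₁ m hm₁ n hn₁)) ?_
          · rw [dist_comm]; exact lt_of_le_of_lt (hdist m) (hN₂ m hm₂)
          · exact lt_of_le_of_lt (hdist n) (hN₂ n hn₂)
      _ = ε := by ring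
  obtain ⟨a, ha⟩ := hdec v hvanti hvcauchy
  refine ⟨a, ?_⟩
  rw [tendsto_iff_dist_tendsto_zero]
  apply squeeze_zero (fun n => dist_nonneg)
    (fun n => dist_triangle (s n) (v n) a)
  have h1 : Tendsto (fun n : ℕ => dist (s n) (v n)) atTop (nhds 0) := by
    apply squeeze_zero (fun n => dist_nonneg) hdist
    simpa using (tendsto_pow_atTop_nhds_zero_of_lt_one (by norm_num : (0:ℝ) ≤ 1/2)
      (by norm_num)).const_mul 2
  have h2 : Tendsto (fun n => dist (v n) a) atTop (nhds 0) :=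
    tendsto_iff_dist_tendsto_zero.1 ha
  simpa using h1.add h2
end

section
/- Let L be a lattice with a metric d satisfying d(x∧y, x∧z) ≤ d(y,z) for all x,y,z, in which every increasing Cauchy sequence converges and every decreasing Cauchy sequence converges. Then L is complete as a metric space. -/
/-!
It suffices to treat sequences `w` whose steps `dist (w k) (w (k+1))` decay geometrically.
Because meeting with a fixed element is 1-Lipschitz, the partial meets `w n ⊓ ⋯ ⊓ w (n+k)` form,
for each `n`, a decreasing sequence with the same geometric step bounds; its limit `v n` lies
within `O(rⁿ)` of `w n`. Continuity of `⊓` passes the inequality between consecutive partial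
meets to the limit, so `v` is increasing, and `v` is Cauchy because it shadows `w`. The limit
of `v` is then the limit of `w`.
-/

open Filter Topology

section ContinuousInf

variable {ι X : Type*} [SemilatticeInf X] [TopologicalSpace X] [ContinuousInf X] [T2Space X]

theorem le_of_tendsto_of_tendsto_of_continuousInf {l : Filter ι} [l.NeBot] {f g : ι → X}
    {x y : X} (hf : Tendsto f l (𝓝 x)) (hg : Tendsto g l (𝓝 y)) (hfg : ∀ᶠ i in l, f i ≤ g i) :
    x ≤ y :=
  inf_eq_left.1 <| tendsto_nhds_unique
    ((hf.inf_nhds hg).congr' (hfg.mono fun _ h => inf_eq_left.2 h)) hf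

end ContinuousInf

section MetricLattice

variable {L : Type*} [Lattice L]

def partialInf (w : ℕ → L) (n : ℕ) : ℕ → L
  | 0 => w n
  | k + 1 => partialInf w n k ⊓ w (n + k + 1)

theorem antitone_partialInf (w : ℕ → L) (n : ℕ) : Antitone (partialInf w n) :=
  antitone_nat_of_succ_le fun _ => inf_le_left

theorem partialInf_le (w : ℕ → L) (n : ℕ) : ∀ k, partialInf w n k ≤ w (n + k)
  | 0 => le_rfl
  | _ + 1 => inf_le_right

theorem partialInf_succ_le_partialInf_add_one (w : ℕ → L) (n : ℕ) :
    ∀ k, partialInf w n (k + 1) ≤ partialInf w (n + 1) k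
  | 0 => inf_le_right
  | k + 1 => by
    have hidx : n + 1 + k + 1 = n + (k + 1) + 1 := by omega
    simpa only [partialInf, hidx] using
      inf_le_inf_right (w (n + (k + 1) + 1)) (partialInf_succ_le_partialInf_add_one w n k)

variable [PseudoMetricSpace L] (hLip : ∀ x y z : L, dist (x ⊓ y) (x ⊓ z) ≤ dist y z)
include hLip

theorem dist_partialInf_succ_le (w : ℕ → L) (n k : ℕ) :
    dist (partialInf w n k) (partialInf w n (k + 1)) ≤ dist (w (n + k)) (w (n + k + 1)) := by
  conv_lhs => rw [← inf_eq_left.2 (partialInf_le w n k)]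
  exact hLip _ _ _

theorem continuousInf_of_dist_inf_le : ContinuousInf L where
  continuous_inf := by
    have hleft (y : L) : LipschitzWith 1 (· ⊓ y) :=
      .mk_one fun x x' => by simpa only [inf_comm _ y] using hLip y x x'
    exact (LipschitzWith.uncurry hleft fun x => .mk_one (hLip x)).continuous

end MetricLattice

theorem exists_tendsto_of_dist_le_geometric {L : Type*} [Lattice L] [MetricSpace L]
    (hLip : ∀ x y z : L, dist (x ⊓ y) (x ⊓ z) ≤ dist y z)
    (hinc : ∀ u : ℕ → L, Monotone u → CauchySeq u → ∃ a, Tendsto u atTop (𝓝 a))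
    (hdec : ∀ u : ℕ → L, Antitone u → CauchySeq u → ∃ a, Tendsto u atTop (𝓝 a))
    {w : ℕ → L} {C r : ℝ} (hr₀ : 0 ≤ r) (hr : r < 1)
    (hw : ∀ k, dist (w k) (w (k + 1)) ≤ C * r ^ k) :
    ∃ a, Tendsto w atTop (𝓝 a) := by
  have := continuousInf_of_dist_inf_le hLip
  have hstep (n k : ℕ) :
      dist (partialInf w n k) (partialInf w n (k + 1)) ≤ C * r ^ n * r ^ k := by
    rw [mul_assoc, ← pow_add]
    exact (dist_partialInf_succ_le hLip w n k).trans (hw _)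
  choose v hv using fun n =>
    hdec _ (antitone_partialInf w n) (cauchySeq_of_le_geometric r _ hr (hstep n))
  have hwv (n : ℕ) : dist (w n) (v n) ≤ C * r ^ n / (1 - r) :=
    dist_le_of_le_geometric_of_tendsto₀ r _ hr (hstep n) (hv n)
  have hv_mono : Monotone v := monotone_nat_of_le_succ fun n =>
    le_of_tendsto_of_tendsto_of_continuousInf ((hv n).comp (tendsto_add_atTop_nat 1))
      (hv (n + 1)) (Eventually.of_forall (partialInf_succ_le_partialInf_add_one w n))
  have hv_cauchy : CauchySeq v := by
    refine cauchySeq_of_le_geometric r (2 * C / (1 - r)) hr fun n => ?_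
    have h1r : 0 < 1 - r := by linarith
    calc dist (v n) (v (n + 1))
        ≤ dist (v n) (w n) + dist (w n) (w (n + 1)) + dist (w (n + 1)) (v (n + 1)) :=
          dist_triangle4 _ _ _ _
      _ ≤ C * r ^ n / (1 - r) + C * r ^ n + C * r ^ (n + 1) / (1 - r) := by
          gcongr
          exacts [dist_comm (w n) (v n) ▸ hwv n, hw n, hwv (n + 1)]
      _ = 2 * C / (1 - r) * r ^ n := by field_simp; ring
  obtain ⟨a, ha⟩ := hinc v hv_mono hv_cauchy
  have hvw : Tendsto (fun n => dist (v n) (w n)) atTop (𝓝 0) := by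
    refine squeeze_zero (fun _ => dist_nonneg) (fun n => dist_comm (v n) (w n) ▸ hwv n) ?_
    simpa using ((tendsto_pow_atTop_nhds_zero_of_lt_one hr₀ hr).const_mul C).div_const (1 - r)
  exact ⟨a, ha.congr_dist hvw⟩

/-- A lattice with a metric satisfying `d(x∧y, x∧z) ≤ d(y,z)`, in which every increasing
Cauchy sequence converges and every decreasing Cauchy sequence converges, is complete as a
metric space. -/
theorem stmt15 {L : Type*} [Lattice L] [MetricSpace L]
    (hLip : ∀ x y z : L, dist (x ⊓ y) (x ⊓ z) ≤ dist y z)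
    (hinc : ∀ u : ℕ → L, Monotone u → CauchySeq u → ∃ a, Tendsto u atTop (nhds a))
    (hdec : ∀ u : ℕ → L, Antitone u → CauchySeq u → ∃ a, Tendsto u atTop (nhds a)) :
    ∀ u : ℕ → L, CauchySeq u → ∃ a, Tendsto u atTop (nhds a) := by
  have : CompleteSpace L :=
    Metric.complete_of_convergent_controlled_sequences (fun n => (1 / 2 : ℝ) ^ n)
      (fun _ => by positivity) fun u hu =>
        exists_tendsto_of_dist_le_geometric hLip hinc hdec (C := 1) (r := 1 / 2)
          (by norm_num) (by norm_num) fun k => by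
            simpa only [one_mul] using (hu k k (k + 1) le_rfl k.le_succ).le
  exact fun u hu => cauchySeq_tendsto_of_complete hu
end

section
/- Let M be a metric space and L the upper semilattice of finite nonempty subsets of M under union, with d_L(S,T) = 0 if S = T and d_L(S,T) = diam(S ∪ T) otherwise, where diam(S) = max_{x,y∈S} d_M(x,y). Then d_L is a metric on L satisfying d_L(S, S ∪ T) ≤ d_L(S,T) for all S, T; moreover L has no strictly increasing Cauchy sequences and no infinite strictly decreasing sequences, and the map x ↦ {x} is an isometric embedding of M onto a closed subset of L. Consequently, if M is not complete, then L is not complete as a metric space. -/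
open Metric

variable {M : Type*} [MetricSpace M]

/-- The upper semilattice (under union) of finite nonempty subsets of `M`. -/
def FinNE (M : Type*) : Type _ := {S : Finset M // S.Nonempty}

instance : PartialOrder (FinNE M) := Subtype.partialOrder _

/-- The union operation (join) on finite nonempty subsets. -/
noncomputable def unn (S T : FinNE M) : FinNE M :=
  letI := Classical.decEq M
  ⟨S.1 ∪ T.1, S.2.mono Finset.subset_union_left⟩

/-- The singleton embedding `M → L`. -/
def sngl (x : M) : FinNE M := ⟨{x}, Finset.singleton_nonempty x⟩

/-- The metric `d_L`: `0` if `S = T`, and otherwise the diameter of `S ∪ T`. -/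
noncomputable def dL (S T : FinNE M) : ℝ :=
  letI := Classical.dec (S = T)
  if S = T then 0 else Metric.diam ((S.1 : Set M) ∪ (T.1 : Set M))

/-- `(uₙ)` is a Cauchy sequence for `d_L`. -/
def CauchyL (u : ℕ → FinNE M) : Prop :=
  ∀ ε > (0:ℝ), ∃ N, ∀ m ≥ N, ∀ n ≥ N, dL (u m) (u n) < ε

section Aux19

lemma dL_self (S : FinNE M) : dL S S = 0 := by simp [dL]

lemma dL_of_ne {S T : FinNE M} (h : S ≠ T) :
    dL S T = Metric.diam ((S.1 : Set M) ∪ (T.1 : Set M)) := by simp [dL, h]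

lemma bddU (S T : FinNE M) : Bornology.IsBounded ((S.1 : Set M) ∪ (T.1 : Set M)) :=
  (S.1.finite_toSet.union T.1.finite_toSet).isBounded

lemma dL_nonneg (S T : FinNE M) : 0 ≤ dL S T := by
  by_cases h : S = T
  · simp [h, dL_self]
  · rw [dL_of_ne h]; exact Metric.diam_nonneg

lemma dL_comm (S T : FinNE M) : dL T S = dL S T := by
  by_cases h : S = T
  · simp [h]
  · rw [dL_of_ne h, dL_of_ne (Ne.symm h), Set.union_comm]

lemma dist_le_dL {S T : FinNE M} (h : S ≠ T) {x y : M}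
    (hx : x ∈ (S.1 : Set M) ∪ (T.1 : Set M)) (hy : y ∈ (S.1 : Set M) ∪ (T.1 : Set M)) :
    dist x y ≤ dL S T := by
  rw [dL_of_ne h]
  exact Metric.dist_le_diam_of_mem (bddU S T) hx hy

lemma dL_eq_zero {S T : FinNE M} : dL S T = 0 ↔ S = T := by
  constructor
  · intro h
    by_contra hne
    obtain ⟨t, ht⟩ := T.2
    have key : ∀ x y : M, x ∈ (S.1 : Set M) ∪ (T.1 : Set M) →
        y ∈ (S.1 : Set M) ∪ (T.1 : Set M) → x = y := by
      intro x y hx hy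
      have := dist_le_dL hne hx hy
      rw [h] at this
      exact dist_le_zero.mp this
    apply hne
    apply Subtype.ext
    apply Finset.ext
    intro x
    constructor
    · intro hx
      have : x = t := key x t (Or.inl hx) (Or.inr ht)
      exact this ▸ ht
    · intro hx
      obtain ⟨s, hs⟩ := S.2
      have : x = s := key x s (Or.inr hx) (Or.inl hs)
      exact this ▸ hs
  · rintro rfl; exact dL_self S

lemma dL_triangle (S T U : FinNE M) : dL S U ≤ dL S T + dL T U := by
  by_cases hST : S = T
  · subst hST; rw [dL_self]; simp
  by_cases hTU : T = U
  · subst hTU; rw [dL_self]; simp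
  by_cases hSU : S = U
  · subst hSU; rw [dL_self]; exact add_nonneg (dL_nonneg _ _) (dL_nonneg _ _)
  rw [dL_of_ne hSU]
  obtain ⟨t, ht⟩ := T.2
  have ht' : (t : M) ∈ (T.1 : Set M) := ht
  apply Metric.diam_le_of_forall_dist_le (add_nonneg (dL_nonneg S T) (dL_nonneg T U))
  intro x hx y hy
  have hxS : ∀ z : M, z ∈ (S.1 : Set M) → dist z t ≤ dL S T := fun z hz =>
    dist_le_dL hST (Or.inl hz) (Or.inr ht')
  have hxU : ∀ z : M, z ∈ (U.1 : Set M) → dist t z ≤ dL T U := fun z hz =>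
    dist_le_dL hTU (Or.inl ht') (Or.inr hz)
  rcases hx with hx | hx <;> rcases hy with hy | hy
  · calc dist x y ≤ dL S T := dist_le_dL hST (Or.inl hx) (Or.inl hy)
      _ ≤ dL S T + dL T U := le_add_of_nonneg_right (dL_nonneg _ _)
  · calc dist x y ≤ dist x t + dist t y := dist_triangle _ _ _
      _ ≤ dL S T + dL T U := add_le_add (hxS x hx) (hxU y hy)
  · calc dist x y ≤ dist x t + dist t y := dist_triangle _ _ _
      _ ≤ dL T U + dL S T := add_le_add
          (by rw [dist_comm]; exact hxU x hx)
          (by rw [dist_comm] at *; exact hxS y hy)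
      _ = dL S T + dL T U := add_comm _ _
  · calc dist x y ≤ dL T U := dist_le_dL hTU (Or.inr hx) (Or.inr hy)
      _ ≤ dL S T + dL T U := le_add_of_nonneg_left (dL_nonneg _ _)

lemma sngl_inj {x y : M} : sngl x = sngl y ↔ x = y := by
  constructor
  · intro h
    have := congrArg (fun S : FinNE M => S.1) h
    simpa [sngl] using this
  · rintro rfl; rfl

lemma dL_sngl (x y : M) : dL (sngl x) (sngl y) = dist x y := by
  by_cases h : x = y
  · subst h; rw [dL_self, dist_self]
  · rw [dL_of_ne (fun hc => h (sngl_inj.mp hc))]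
    have : ((sngl x : FinNE M).1 : Set M) ∪ ((sngl y : FinNE M).1 : Set M)
        = {x, y} := by
      simp [sngl, Set.singleton_union, Set.pair_comm y x]
    rw [this, Metric.diam_pair]

lemma closed_sngl (S : FinNE M) (h : ∀ ε > (0:ℝ), ∃ x : M, dL S (sngl x) < ε) :
    ∃ x : M, S = sngl x := by
  by_contra hc
  push_neg at hc
  -- S has two distinct points
  have hcard : 1 < S.1.card := by
    rcases S.2.exists_mem with ⟨s, hs⟩
    rcases Nat.lt_or_ge 1 S.1.card with h1 | h1
    · exact h1
    · exfalso
      have : S.1.card = 1 := le_antisymm h1 (Finset.Nonempty.card_pos S.2)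
      obtain ⟨a, ha⟩ := Finset.card_eq_one.mp this
      exact hc a (Subtype.ext ha)
  obtain ⟨a, ha, b, hb, hab⟩ := Finset.one_lt_card.mp hcard
  have hd : (0:ℝ) < dist a b := dist_pos.mpr hab
  obtain ⟨x, hx⟩ := h (dist a b) hd
  have hne : S ≠ sngl x := hc x
  have : dist a b ≤ dL S (sngl x) :=
    dist_le_dL hne (Or.inl ha) (Or.inl hb)
  linarith

end Aux19

/-- `d_L` is a metric on the semilattice `L` of finite nonempty subsets of `M` satisfying
`d_L(S, S ∪ T) ≤ d_L(S,T)`; `L` has no strictly increasing Cauchy sequences and no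
infinite strictly decreasing sequences; `x ↦ {x}` is an isometric embedding of `M` onto a
closed subset of `L`; and if `M` is not complete then neither is `L`. -/


theorem stmt19 :
    (∀ S T : FinNE M, 0 ≤ dL S T) ∧
    (∀ S T : FinNE M, dL S T = 0 ↔ S = T) ∧
    (∀ S T : FinNE M, dL T S = dL S T) ∧
    (∀ S T U : FinNE M, dL S U ≤ dL S T + dL T U) ∧
    (∀ S T : FinNE M, dL S (unn S T) ≤ dL S T) ∧
    (¬∃ u : ℕ → FinNE M, (∀ n, u n < u (n + 1)) ∧ CauchyL u) ∧
    (¬∃ u : ℕ → FinNE M, ∀ n, u (n + 1) < u n) ∧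
    (∀ x y : M, dL (sngl x) (sngl y) = dist x y) ∧
    (∀ S : FinNE M, (∀ ε > (0:ℝ), ∃ x : M, dL S (sngl x) < ε) → ∃ x : M, S = sngl x) ∧
    (¬CompleteSpace M →
      ∃ u : ℕ → FinNE M, CauchyL u ∧
        ¬∃ a : FinNE M, ∀ ε > (0:ℝ), ∃ N, ∀ n ≥ N, dL (u n) a < ε) := by

  refine ⟨dL_nonneg, fun S T => dL_eq_zero, dL_comm, dL_triangle, ?_, ?_, ?_,
    dL_sngl, closed_sngl, ?_⟩
  · -- dL S (unn S T) ≤ dL S T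
    intro S T
    by_cases h1 : S = unn S T
    · rw [← h1, dL_self]; exact dL_nonneg _ _
    · have hST : S ≠ T := by
        rintro rfl
        exact h1 (Subtype.ext (by simp [unn]))
      rw [dL_of_ne h1, dL_of_ne hST]
      have : ((S.1 : Set M) ∪ ((unn S T).1 : Set M)) = (S.1 : Set M) ∪ (T.1 : Set M) := by
        simp [unn, Set.union_assoc]
      rw [this]
  · -- no strictly increasing Cauchy sequence
    rintro ⟨u, hmono, hcau⟩
    have hsm : StrictMono u := strictMono_nat_of_lt_succ hmono
    -- pick two distinct points in u 1
    obtain ⟨a, ha⟩ := (u 0).2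
    obtain ⟨b, hb, hb'⟩ := Finset.exists_of_ssubset (hmono 0 : (u 0).1 < (u 1).1)
    have ha1 : a ∈ (u 1).1 := (le_of_lt (hmono 0) : (u 0).1 ≤ (u 1).1) ha
    have hab : a ≠ b := fun h => hb' (h ▸ ha)
    obtain ⟨N, hN⟩ := hcau (dist a b) (dist_pos.mpr hab)
    set m := max N 1 with hm
    have h1m : (u 1).1 ≤ (u m).1 := hsm.monotone (le_max_right N 1)
    have h1m' : (u 1).1 ≤ (u (m+1)).1 := hsm.monotone ((le_max_right N 1).trans (Nat.le_succ m))
    have hne : u m ≠ u (m+1) := ne_of_lt (hsm (Nat.lt_succ_self m))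
    have hle : dist a b ≤ dL (u m) (u (m+1)) :=
      dist_le_dL hne (Or.inl (h1m ha1)) (Or.inl (h1m hb))
    have := hN m (le_max_left N 1) (m+1) ((le_max_left N 1).trans (Nat.le_succ m))
    linarith
  · -- no strictly decreasing sequence
    rintro ⟨u, hdec⟩
    have key : ∀ n, (u n).1.card + n ≤ (u 0).1.card := by
      intro n
      induction n with
      | zero => simp
      | succ k ih =>
        have : (u (k+1)).1.card < (u k).1.card := Finset.card_lt_card (hdec k)
        omega
    have h1 : 1 ≤ (u ((u 0).1.card)).1.card := Finset.Nonempty.card_pos (u _).2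
    have := key ((u 0).1.card)
    omega
  · -- incompleteness transfer
    intro hM
    have : ¬ ∀ (v : ℕ → M), CauchySeq v → ∃ a, Filter.Tendsto v Filter.atTop (nhds a) := by
      intro h
      exact hM (Metric.complete_of_cauchySeq_tendsto h)
    push_neg at this
    obtain ⟨v, hv, hvl⟩ := this
    refine ⟨fun n => sngl (v n), ?_, ?_⟩
    · intro ε hε
      obtain ⟨N, hN⟩ := Metric.cauchySeq_iff.mp hv ε hε
      exact ⟨N, fun p hp q hq => by rw [dL_sngl]; exact hN p hp q hq⟩
    · rintro ⟨a, ha⟩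
      have : ∃ y, a = sngl y := by
        apply closed_sngl
        intro ε hε
        obtain ⟨N, hN⟩ := ha ε hε
        exact ⟨v N, by rw [dL_comm]; exact hN N le_rfl⟩
      obtain ⟨y, rfl⟩ := this
      apply hvl y
      rw [Metric.tendsto_atTop]
      intro ε hε
      obtain ⟨N, hN⟩ := ha ε hε
      exact ⟨N, fun n hn => by rw [← dL_sngl]; exact hN n hn⟩
end
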